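/- arXiv:math-ph/0104017 — 3 statements merged into one kernel-verified Lean document; each statement's English description precedes it below -/
import Mathlib

section
/- Let H = ⊕_{n∈ℕ} H^n be an ℕ-graded connected bialgebra over k. For any n∈ℕ, any infinitesimal characters Z_1,…,Z_{n+1} of H, and any h ∈ ⊕_{p≤n} H^p, the (n+1)-fold convolution product satisfies ⟨Z_1 * ⋯ * Z_{n+1}, h⟩ = 0. -/
open TensorProduct

/-- The convolution product on the algebraic dual `H →ₗ[R] R` of a coalgebra `H`:
`⟨ξ * η, h⟩ = ⟨ξ ⊗ η, Δ h⟩`. -/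
noncomputable def conv {R H : Type*} [CommSemiring R] [AddCommMonoid H] [Module R H]
    [Coalgebra R H] (ξ η : H →ₗ[R] R) : H →ₗ[R] R :=
  LinearMap.mul' R R ∘ₗ TensorProduct.map ξ η ∘ₗ Coalgebra.comul

/-- The iterated convolution product `Z₁ * ⋯ * Zₙ` of a finite family of functionals
(the empty product being the counit). -/
noncomputable def convFam {R H : Type*} [CommSemiring R] [AddCommMonoid H] [Module R H]
    [Coalgebra R H] : (n : ℕ) → (Fin n → (H →ₗ[R] R)) → (H →ₗ[R] R)
  | 0, _ => Coalgebra.counit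
  | n + 1, Z => conv (Z 0) (convFam n (fun i => Z i.succ))

/-- An infinitesimal character of `H`: an `R`-linear map `Z : H → R` with
`Z (hk) = Z h * ε k + ε h * Z k`. -/
def IsInfinitesimalCharacter {R H : Type*} [CommSemiring R] [Semiring H] [Module R H]
    [Coalgebra R H] (Z : H →ₗ[R] R) : Prop :=
  ∀ a b : H, Z (a * b) = Z a * Coalgebra.counit b + Coalgebra.counit a * Z b

/-- The submodule `A ⊗ B` of `H ⊗ H` spanned by the pure tensors `a ⊗ b` with `a ∈ A`,
`b ∈ B`. -/
noncomputable def tensorSub {R H : Type*} [CommSemiring R] [AddCommMonoid H] [Module R H]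
    (A B : Submodule R H) : Submodule R (H ⊗[R] H) :=
  Submodule.span R {z : H ⊗[R] H | ∃ a ∈ A, ∃ b ∈ B, z = a ⊗ₜ[R] b}

/-!
An infinitesimal character vanishes at `1`, hence on `H⁰ = k·1`. For `x` of degree `p`,
`⟨Z₁ * (Z₂ * ⋯ * Zₘ), x⟩` is a sum of terms `Z₁ x' · ⟨Z₂ * ⋯ * Zₘ, x''⟩` with
`deg x' + deg x'' = p`: either `deg x' = 0`, or `deg x'' < p`, and induction on `m` shows that
an `m`-fold product of functionals vanishing on `H⁰` vanishes in every degree `p < m`.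
-/

theorem IsInfinitesimalCharacter.map_one {R H : Type*} [CommRing R] [Semiring H]
    [Bialgebra R H] {Z : H →ₗ[R] R} (hZ : IsInfinitesimalCharacter Z) : Z 1 = 0 := by
  have h := hZ 1 1
  rw [one_mul, Bialgebra.counit_one, mul_one, one_mul] at h
  linear_combination -h

theorem IsInfinitesimalCharacter.eq_zero_of_mem_span_one {R H : Type*} [CommRing R]
    [Semiring H] [Bialgebra R H] {Z : H →ₗ[R] R} (hZ : IsInfinitesimalCharacter Z) {a : H}
    (ha : a ∈ Submodule.span R {(1 : H)}) : Z a = 0 := by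
  obtain ⟨c, rfl⟩ := Submodule.mem_span_singleton.mp ha
  rw [map_smul, hZ.map_one, smul_zero]

theorem tensorSub_le_ker_mul'_comp_map {R H : Type*} [CommSemiring R] [AddCommMonoid H]
    [Module R H] {A B : Submodule R H} {ξ η : H →ₗ[R] R}
    (h : (∀ a ∈ A, ξ a = 0) ∨ (∀ b ∈ B, η b = 0)) :
    tensorSub A B ≤ LinearMap.ker (LinearMap.mul' R R ∘ₗ TensorProduct.map ξ η) := by
  rw [tensorSub, Submodule.span_le]
  rintro _ ⟨a, ha, b, hb, rfl⟩
  simp only [SetLike.mem_coe, LinearMap.mem_ker, LinearMap.comp_apply,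
    TensorProduct.map_tmul, LinearMap.mul'_apply]
  rcases h with hξ | hη
  · rw [hξ a ha, zero_mul]
  · rw [hη b hb, mul_zero]

section Graded

variable {R H : Type*} [CommSemiring R] [AddCommMonoid H] [Module R H] [Coalgebra R H]
  {𝒜 : ℕ → Submodule R H}

theorem conv_apply_eq_zero_of_comul_mem {ξ η : H →ₗ[R] R} {m : ℕ} {x : H}
    (hx : Coalgebra.comul (R := R) x ∈
      ⨆ (p : ℕ × ℕ) (_ : p.1 + p.2 = m), tensorSub (𝒜 p.1) (𝒜 p.2))
    (hξη : ∀ i j : ℕ, i + j = m → (∀ a ∈ 𝒜 i, ξ a = 0) ∨ (∀ b ∈ 𝒜 j, η b = 0)) :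
    conv ξ η x = 0 := by
  have hle : (⨆ (p : ℕ × ℕ) (_ : p.1 + p.2 = m), tensorSub (𝒜 p.1) (𝒜 p.2)) ≤
      LinearMap.ker (LinearMap.mul' R R ∘ₗ TensorProduct.map ξ η) :=
    iSup₂_le fun p hp => tensorSub_le_ker_mul'_comp_map (hξη p.1 p.2 hp)
  exact hle hx

theorem convFam_apply_eq_zero_of_lt
    (hcomul : ∀ n : ℕ, ∀ x ∈ 𝒜 n,
      Coalgebra.comul (R := R) x ∈
        ⨆ (p : ℕ × ℕ) (_ : p.1 + p.2 = n), tensorSub (𝒜 p.1) (𝒜 p.2))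
    {m : ℕ} (Z : Fin m → (H →ₗ[R] R)) (hZ : ∀ i, ∀ a ∈ 𝒜 0, Z i a = 0)
    {p : ℕ} (hp : p < m) {x : H} (hx : x ∈ 𝒜 p) : convFam m Z x = 0 := by
  induction m generalizing p x with
  | zero => omega
  | succ m ih =>
    refine conv_apply_eq_zero_of_comul_mem (hcomul p x hx) fun i j hij => ?_
    rcases Nat.eq_zero_or_pos i with rfl | hi
    · exact Or.inl (hZ 0)
    · exact Or.inr fun b hb => ih _ (fun k => hZ k.succ) (by omega) hb

end Graded

theorem convolution_of_infChars_vanishes_in_low_degree_general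
    {R H : Type*} [Field R] [Ring H] [Bialgebra R H]
    (𝒜 : ℕ → Submodule R H)
    (hcomul : ∀ n : ℕ, ∀ x ∈ 𝒜 n,
      Coalgebra.comul (R := R) x ∈
        ⨆ (p : ℕ × ℕ) (_ : p.1 + p.2 = n), tensorSub (𝒜 p.1) (𝒜 p.2))
    (hconn : 𝒜 0 = Submodule.span R {(1 : H)})
    (n : ℕ) (Z : Fin (n + 1) → (H →ₗ[R] R))
    (hZ : ∀ i, IsInfinitesimalCharacter (Z i))
    (h : H) (hh : h ∈ ⨆ (p : ℕ) (_ : p ≤ n), 𝒜 p) :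
    convFam (n + 1) Z h = 0 := by
  have hZ0 : ∀ i, ∀ a ∈ 𝒜 0, Z i a = 0 := fun i a ha =>
    (hZ i).eq_zero_of_mem_span_one (hconn ▸ ha)
  have hle : (⨆ (p : ℕ) (_ : p ≤ n), 𝒜 p) ≤ LinearMap.ker (convFam (n + 1) Z) :=
    iSup₂_le fun p hp x hx =>
      convFam_apply_eq_zero_of_lt hcomul Z hZ0 (Nat.lt_succ_of_le hp) hx
  exact hle hh

/-- In an ℕ-graded connected bialgebra `H` over a field of characteristic zero, any
`(n+1)`-fold convolution product `Z₁ * ⋯ * Z_{n+1}` of infinitesimal characters vanishes on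
every element of degree at most `n`, i.e. on `⊕_{p ≤ n} Hᵖ`. -/
theorem convolution_of_infChars_vanishes_in_low_degree
    {R H : Type*} [Field R] [CharZero R] [Ring H] [Bialgebra R H]
    (𝒜 : ℕ → Submodule R H)
    (hdirect : DirectSum.IsInternal 𝒜)
    (hmul : ∀ (p q : ℕ), ∀ a ∈ 𝒜 p, ∀ b ∈ 𝒜 q, a * b ∈ 𝒜 (p + q))
    (hcomul : ∀ n : ℕ, ∀ x ∈ 𝒜 n,
      Coalgebra.comul (R := R) x ∈
        ⨆ (p : ℕ × ℕ) (_ : p.1 + p.2 = n), tensorSub (𝒜 p.1) (𝒜 p.2))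
    (hconn : 𝒜 0 = Submodule.span R {(1 : H)})
    (n : ℕ) (Z : Fin (n + 1) → (H →ₗ[R] R))
    (hZ : ∀ i, IsInfinitesimalCharacter (Z i))
    (h : H) (hh : h ∈ ⨆ (p : ℕ) (_ : p ≤ n), 𝒜 p) :
    convFam (n + 1) Z h = 0 :=
  convolution_of_infChars_vanishes_in_low_degree_general 𝒜 hcomul hconn n Z hZ h hh
end

section
/- Let H be a CMK Hopf algebra over k, let Z_1,…,Z_n (n≥1) be infinitesimal characters of H with restrictions φ_j = Z_j|_V to V, and let x_{i_1},…,x_{i_n} be basis elements of V. Then the n-fold convolution product satisfies ⟨Z_1 * ⋯ * Z_n, x_{i_1}⋯x_{i_n}⟩ = Σ_{σ∈S_n} φ_{σ(1)}(x_{i_1})·φ_{σ(2)}(x_{i_2})⋯φ_{σ(n)}(x_{i_n}), the sum running over all permutations σ of {1,…,n}. -/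
open TensorProduct

/-- The subspace `V` of `H` spanned by the generators `xᵢ`. -/
noncomputable def genSpan (R : Type*) {H : Type*} [CommSemiring R] [AddCommMonoid H]
    [Module R H] (x : ℕ → H) : Submodule R H :=
  Submodule.span R (Set.range x)

/-
Let `J = ker ε`. For every `h`, `Δ h - 1 ⊗ h` lies in the ideal `J ⊗ H` and `Δ h - h ⊗ 1` in
`H ⊗ J` (they are killed by `ε ⊗ id`, resp. `id ⊗ ε`). Hence `Δ (J ^ k) ⊆ (J ⊗ H + H ⊗ J) ^ k`,
and since an infinitesimal character kills `J ^ 2`, induction shows that the convolution of `n`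
of them kills `J ^ (n + 1)`. For `y₀, …, yₙ ∈ J`, expanding `Δ (∏ yⱼ) = ∏ (1 ⊗ yⱼ + ℓⱼ)` with
`ℓⱼ ∈ J ⊗ H` to first order modulo `(J ⊗ H) ^ 2` gives
`⟨Z * W, ∏ yⱼ⟩ = ∑ⱼ Z (yⱼ) W (∏_{i ≠ j} yᵢ)` for an infinitesimal character `Z` and any `W`
killing `J ^ (n + 1)`. This is the expansion along the first row of the permanent of
`(Z_k (y_j))`, which is the right-hand side.
-/

namespace Matrix

theorem permanent_succ_column_zero {R : Type*} [CommSemiring R] {n : ℕ}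
    (A : Matrix (Fin (n + 1)) (Fin (n + 1)) R) :
    A.permanent = ∑ i, A i 0 * (A.submatrix i.succAbove Fin.succ).permanent := by
  rw [permanent, Finset.univ_perm_fin_succ, ← Finset.univ_product_univ]
  simp only [Finset.sum_map, Equiv.toEmbedding_apply, Finset.sum_product]
  refine Finset.sum_congr rfl fun i _ => Fin.cases ?_ (fun i => ?_) i
  · simp [Fin.prod_univ_succ, permanent, Finset.mul_sum]
  · rw [← permanent_permute_cols i.cycleRange, permanent, Finset.mul_sum]
    refine Finset.sum_congr rfl fun σ _ => ?_
    simp [Fin.prod_univ_succ, Fin.succAbove_cycleRange]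

theorem permanent_succ_row_zero {R : Type*} [CommSemiring R] {n : ℕ}
    (A : Matrix (Fin (n + 1)) (Fin (n + 1)) R) :
    A.permanent = ∑ j, A 0 j * (A.submatrix Fin.succ j.succAbove).permanent := by
  rw [← permanent_transpose, permanent_succ_column_zero]
  simp [← transpose_submatrix]

end Matrix

theorem Ideal.sup_pow_add_add_one_le_pow_sup_pow {A : Type*} [CommSemiring A] (I J : Ideal A)
    (n m : ℕ) :
    (I ⊔ J) ^ (n + m + 1) ≤ I ^ (n + 1) ⊔ J ^ (m + 1) := by
  rw [← Ideal.add_eq_sup, ← Ideal.add_eq_sup, add_pow, Ideal.sum_eq_sup]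
  refine Finset.sup_le fun i hi => ?_
  by_cases hn : n + 1 ≤ i
  · exact Ideal.mul_le_left.trans (Ideal.mul_le_left.trans
      ((Ideal.pow_le_pow_right hn).trans le_sup_left))
  · refine Ideal.mul_le_left.trans (Ideal.mul_le_right.trans
      ((Ideal.pow_le_pow_right ?_).trans le_sup_right))
    simp only [Finset.mem_range] at hi
    lia

theorem Ideal.prod_sub_prod_sub_sum_mem_sq {A : Type*} [CommRing A] (I : Ideal A) :
    ∀ {n : ℕ} (b a : Fin (n + 1) → A), (∀ j, b j - a j ∈ I) →
      ∏ j, b j - ∏ j, a j - ∑ j, (b j - a j) * ∏ i, a (j.succAbove i) ∈ I ^ 2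
  | 0, b, a, _ => by simp
  | n + 1, b, a, h => by
    set S := ∑ j : Fin (n + 1), (b j.succ - a j.succ) * ∏ i, a (j.succAbove i).succ
    set E := ∏ j : Fin (n + 1), b j.succ - ∏ j : Fin (n + 1), a j.succ - S
    have hE : E ∈ I ^ 2 :=
      Ideal.prod_sub_prod_sub_sum_mem_sq I (fun j => b j.succ) (fun j => a j.succ) fun j => h _
    have hS : S ∈ I := Ideal.sum_mem _ fun j _ => Ideal.mul_mem_right _ _ (h _)
    have hsucc (j : Fin (n + 1)) :
        ∏ i, a (j.succ.succAbove i) = a 0 * ∏ i, a (j.succAbove i).succ := by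
      simp [Fin.prod_univ_succ, Fin.succ_succAbove_succ]
    have hexpand : ∏ j, b j - ∏ j, a j - ∑ j, (b j - a j) * ∏ i, a (j.succAbove i)
        = a 0 * E + (b 0 - a 0) * (S + E) := by
      rw [Fin.prod_univ_succ b, Fin.prod_univ_succ a, Fin.sum_univ_succ]
      simp only [Fin.succAbove_zero, hsucc, mul_left_comm _ (a 0), ← Finset.mul_sum]
      ring
    rw [hexpand, sq]
    exact add_mem (Ideal.mul_mem_left _ _ (sq I ▸ hE))
      (Ideal.mul_mem_mul (h 0) (add_mem hS (Ideal.pow_le_self two_ne_zero hE)))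

open Algebra.TensorProduct (includeLeft includeRight)

section Module

variable {R H : Type*} [CommSemiring R] [AddCommMonoid H] [Module R H]

def tensorPairing (ξ η : H →ₗ[R] R) : H ⊗[R] H →ₗ[R] R :=
  LinearMap.mul' R R ∘ₗ TensorProduct.map ξ η

@[simp]
theorem tensorPairing_tmul (ξ η : H →ₗ[R] R) (a b : H) :
    tensorPairing ξ η (a ⊗ₜ b) = ξ a * η b := by
  simp [tensorPairing]

theorem conv_apply [Coalgebra R H] (ξ η : H →ₗ[R] R) (h : H) :
    conv ξ η h = tensorPairing ξ η (Coalgebra.comul h) := rfl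

end Module

section Algebra

variable {R H : Type*} [CommSemiring R] [Semiring H] [Algebra R H]

theorem tensorPairing_eq_zero_of_mem_map_includeLeft {ξ η : H →ₗ[R] R} {I : Ideal H}
    (hξ : ∀ a ∈ I, ξ a = 0) {z : H ⊗[R] H} (hz : z ∈ I.map (includeLeft (S := R))) :
    tensorPairing ξ η z = 0 := by
  obtain ⟨w, rfl⟩ := (Ideal.map_includeLeft_eq I).le hz
  have hξI : ξ ∘ₗ (I.restrictScalars R).subtype = 0 := LinearMap.ext fun a => hξ a a.2
  simp [tensorPairing, hξI]

theorem tensorPairing_eq_zero_of_mem_map_includeRight {ξ η : H →ₗ[R] R} {I : Ideal H}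
    (hη : ∀ b ∈ I, η b = 0) {z : H ⊗[R] H} (hz : z ∈ I.map (includeRight (R := R))) :
    tensorPairing ξ η z = 0 := by
  obtain ⟨w, rfl⟩ := (Ideal.map_includeRight_eq I).le hz
  have hηI : η ∘ₗ (I.restrictScalars R).subtype = 0 := LinearMap.ext fun b => hη b b.2
  simp [tensorPairing, hηI]

theorem tensorPairing_mul_one_tmul (ξ η : H →ₗ[R] R) (z : H ⊗[R] H) (b : H) :
    tensorPairing ξ η (z * (1 ⊗ₜ b)) = tensorPairing ξ (η ∘ₗ LinearMap.mulRight R b) z := by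
  induction z using TensorProduct.induction_on with
  | zero => simp
  | tmul a c => simp
  | add z w hz hw => rw [add_mul, map_add, map_add, hz, hw]

end Algebra

namespace Bialgebra

variable {R H : Type*} [CommRing R] [CommRing H] [Bialgebra R H]

variable (R H) in
def augmentationIdeal : Ideal H := RingHom.ker (counitAlgHom R H)

theorem mem_augmentationIdeal {h : H} :
    h ∈ augmentationIdeal R H ↔ Coalgebra.counit (R := R) h = 0 := Iff.rfl

theorem comul_sub_one_tmul_mem (h : H) :
    Coalgebra.comul (R := R) h - 1 ⊗ₜ h ∈ (augmentationIdeal R H).map (includeLeft (S := R)) := by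
  rw [augmentationIdeal, ← Algebra.TensorProduct.rTensor_ker _ counit_surjective,
    RingHom.mem_ker, map_sub, sub_eq_zero, Algebra.TensorProduct.map_tmul, map_one, AlgHom.id_apply]
  exact Coalgebra.rTensor_counit_comul h

theorem comul_sub_tmul_one_mem (h : H) :
    Coalgebra.comul (R := R) h - h ⊗ₜ 1 ∈ (augmentationIdeal R H).map (includeRight (R := R)) := by
  rw [augmentationIdeal, ← Algebra.TensorProduct.lTensor_ker _ counit_surjective,
    RingHom.mem_ker, map_sub, sub_eq_zero, Algebra.TensorProduct.map_tmul, map_one, AlgHom.id_apply]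
  exact Coalgebra.lTensor_counit_comul h

theorem map_comul_augmentationIdeal_le :
    (augmentationIdeal R H).map (comulAlgHom R H) ≤
      (augmentationIdeal R H).map (includeLeft (S := R)) ⊔
        (augmentationIdeal R H).map (includeRight (R := R)) := by
  refine Ideal.map_le_iff_le_comap.mpr fun h hh => ?_
  rw [Ideal.mem_comap, comulAlgHom_apply, ← sub_add_cancel (Coalgebra.comul h) (1 ⊗ₜ h)]
  exact Submodule.add_mem_sup (comul_sub_one_tmul_mem h) (Ideal.mem_map_of_mem includeRight hh)

end Bialgebra

open Bialgebra

namespace IsInfinitesimalCharacter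

variable {R H : Type*} [CommRing R] [CommRing H] [Bialgebra R H] {Z : H →ₗ[R] R}

theorem map_one_s14 (hZ : IsInfinitesimalCharacter Z) : Z 1 = 0 := by
  simpa using hZ 1 1

theorem eq_zero_of_mem_sq (hZ : IsInfinitesimalCharacter Z) :
    ∀ h ∈ augmentationIdeal R H ^ 2, Z h = 0 := by
  intro h hh
  rw [pow_two] at hh
  refine Submodule.mul_induction_on hh (fun a ha b hb => ?_) fun a b ha hb => ?_
  · rw [hZ, mem_augmentationIdeal.mp ha, mem_augmentationIdeal.mp hb, mul_zero, zero_mul, add_zero]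
  · rw [map_add, ha, hb, add_zero]

end IsInfinitesimalCharacter

section Convolution

variable {R H : Type*} [CommRing R] [CommRing H] [Bialgebra R H]

theorem conv_apply_of_forall_mem_augmentationIdeal {ξ η : H →ₗ[R] R}
    (hη : ∀ b ∈ augmentationIdeal R H, η b = 0) (h : H) : conv ξ η h = ξ h * η 1 := by
  rw [conv_apply, ← sub_add_cancel (Coalgebra.comul h) (h ⊗ₜ 1), map_add,
    tensorPairing_eq_zero_of_mem_map_includeRight hη (comul_sub_tmul_one_mem h), zero_add,
    tensorPairing_tmul]

theorem convFam_eq_zero_of_mem_pow : ∀ {n : ℕ} {Z : Fin n → H →ₗ[R] R},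
    (∀ j, IsInfinitesimalCharacter (Z j)) →
      ∀ h ∈ augmentationIdeal R H ^ (n + 1), convFam n Z h = 0
  | 0, _, _, h, hh => mem_augmentationIdeal.mp (pow_one (augmentationIdeal R H) ▸ hh)
  | n + 1, Z, hZ, h, hh => by
    have hΔ : Coalgebra.comul h ∈ (augmentationIdeal R H ^ 2).map (includeLeft (S := R)) ⊔
        (augmentationIdeal R H ^ (n + 1)).map (includeRight (R := R)) := by
      rw [Ideal.map_pow, Ideal.map_pow]
      refine Ideal.sup_pow_add_add_one_le_pow_sup_pow _ _ 1 n ?_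
      refine Ideal.pow_right_mono map_comul_augmentationIdeal_le _ ?_
      rw [← Ideal.map_pow, add_comm 1 n]
      exact Ideal.mem_map_of_mem _ hh
    obtain ⟨a, ha, b, hb, hab⟩ := Submodule.mem_sup.mp hΔ
    rw [convFam, conv_apply, ← hab, map_add,
      tensorPairing_eq_zero_of_mem_map_includeLeft (hZ 0).eq_zero_of_mem_sq ha,
      tensorPairing_eq_zero_of_mem_map_includeRight
        (convFam_eq_zero_of_mem_pow fun j => hZ j.succ) hb, add_zero]

theorem conv_prod_eq_sum {Z W : H →ₗ[R] R} (hZ : IsInfinitesimalCharacter Z) {n : ℕ}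
    (hW : ∀ h ∈ augmentationIdeal R H ^ (n + 1), W h = 0) (y : Fin (n + 1) → H)
    (hy : ∀ j, y j ∈ augmentationIdeal R H) :
    conv Z W (∏ j, y j) = ∑ j, Z (y j) * W (∏ i, y (j.succAbove i)) := by
  set b : Fin (n + 1) → H ⊗[R] H := fun j => Coalgebra.comul (y j)
  set a : Fin (n + 1) → H ⊗[R] H := fun j => 1 ⊗ₜ y j
  have one_tmul_prod {m : ℕ} (f : Fin m → H) : ∏ i, (1 ⊗ₜ f i : H ⊗[R] H) = 1 ⊗ₜ ∏ i, f i :=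
    (map_prod includeRight f _).symm
  have hlead : tensorPairing Z W (∏ j, a j) = 0 := by
    rw [one_tmul_prod, tensorPairing_tmul, hZ.map_one_s14, zero_mul]
  have hterm (j : Fin (n + 1)) : tensorPairing Z W ((b j - a j) * ∏ i, a (j.succAbove i)) =
      Z (y j) * W (∏ i, y (j.succAbove i)) := by
    set Q := ∏ i, y (j.succAbove i)
    have hQ : Q ∈ augmentationIdeal R H ^ n := by
      simpa using Ideal.prod_mem_prod (s := Finset.univ) (I := fun _ => augmentationIdeal R H)
        fun i _ => hy (j.succAbove i)
    -- `(b j - a j) * (1 ⊗ Q)` pairs to `(Z * W (· * Q)) (y j)`, and `W (· * Q)` kills `J`.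
    have hWQ : ∀ c ∈ augmentationIdeal R H, (W ∘ₗ LinearMap.mulRight R Q) c = 0 := fun c hc =>
      hW _ (pow_succ' (augmentationIdeal R H) n ▸ Ideal.mul_mem_mul hc hQ)
    rw [one_tmul_prod, tensorPairing_mul_one_tmul, map_sub, ← conv_apply,
      conv_apply_of_forall_mem_augmentationIdeal hWQ, tensorPairing_tmul, hZ.map_one_s14]
    simp
  have hsq : ∏ j, b j - ∏ j, a j - ∑ j, (b j - a j) * ∏ i, a (j.succAbove i) ∈
      (augmentationIdeal R H ^ 2).map (includeLeft (S := R)) := by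
    rw [Ideal.map_pow]
    exact Ideal.prod_sub_prod_sub_sum_mem_sq _ b a fun j => comul_sub_one_tmul_mem (y j)
  replace hsq := tensorPairing_eq_zero_of_mem_map_includeLeft (η := W) hZ.eq_zero_of_mem_sq hsq
  rw [map_sub, map_sub, map_sum, hlead, sub_zero, sub_eq_zero] at hsq
  rw [conv_apply, ← comulAlgHom_apply, map_prod]
  exact hsq.trans (Finset.sum_congr rfl fun j _ => hterm j)

theorem convFam_prod_eq_permanent : ∀ {n : ℕ} {Z : Fin n → H →ₗ[R] R},
    (∀ j, IsInfinitesimalCharacter (Z j)) → ∀ (y : Fin n → H),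
      (∀ j, y j ∈ augmentationIdeal R H) →
        convFam n Z (∏ j, y j) = (Matrix.of fun k j => Z k (y j)).permanent
  | 0, _, _, _, _ => by simp [convFam, Matrix.permanent_isEmpty]
  | n + 1, Z, hZ, y, hy => by
    rw [convFam, conv_prod_eq_sum (hZ 0) (convFam_eq_zero_of_mem_pow fun j => hZ j.succ) y hy,
      Matrix.permanent_succ_row_zero]
    refine Finset.sum_congr rfl fun j _ => ?_
    rw [convFam_prod_eq_permanent (fun k => hZ k.succ) _ fun i => hy (j.succAbove i)]
    rfl

end Convolution

theorem cmk_convolution_on_monomials_general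
    {R H : Type*} [Field R] [CommRing H] [HopfAlgebra R H]
    (x : ℕ → H)
    (hεx : ∀ i, Coalgebra.counit (R := R) (x i) = 0)
    (n : ℕ)
    (Z : Fin n → (H →ₗ[R] R)) (hZ : ∀ j, IsInfinitesimalCharacter (Z j))
    (idx : Fin n → ℕ) :
    convFam n Z (∏ j, x (idx j)) =
      ∑ σ : Equiv.Perm (Fin n), ∏ j, Z (σ j) (x (idx j)) :=
  convFam_prod_eq_permanent hZ (fun j => x (idx j)) fun j => hεx (idx j)

/-- In a CMK Hopf algebra `H`, for infinitesimal characters `Z₁, …, Zₙ` (`n ≥ 1`) and basis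
elements `x_{i₁}, …, x_{iₙ}` of `V`, one has
`⟨Z₁ * ⋯ * Zₙ, x_{i₁} ⋯ x_{iₙ}⟩ = Σ_{σ ∈ Sₙ} Π_j Z_{σ(j)}(x_{i_j})`. -/
theorem cmk_convolution_on_monomials
    {R H : Type*} [Field R] [CharZero R] [CommRing H] [HopfAlgebra R H]
    (x : ℕ → H)
    (hfree : Function.Bijective (MvPolynomial.aeval x : MvPolynomial ℕ R →ₐ[R] H))
    (hΔx : ∀ i, Coalgebra.comul (R := R) (x i) - x i ⊗ₜ[R] (1 : H) - (1 : H) ⊗ₜ[R] x i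
      ∈ tensorSub (⊤ : Submodule R H) (genSpan R x))
    (hεx : ∀ i, Coalgebra.counit (R := R) (x i) = 0)
    (𝒜 : ℕ → Submodule R H)
    (hdirect : DirectSum.IsInternal 𝒜)
    (hmul : ∀ (p q : ℕ), ∀ a ∈ 𝒜 p, ∀ b ∈ 𝒜 q, a * b ∈ 𝒜 (p + q))
    (hcomul : ∀ n : ℕ, ∀ h ∈ 𝒜 n,
      Coalgebra.comul (R := R) h ∈
        ⨆ (p : ℕ × ℕ) (_ : p.1 + p.2 = n), tensorSub (𝒜 p.1) (𝒜 p.2))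
    (hconn : 𝒜 0 = Submodule.span R {(1 : H)})
    (hx : ∀ i, ∃ n : ℕ, 0 < n ∧ x i ∈ 𝒜 n)
    (n : ℕ) (hn : 1 ≤ n)
    (Z : Fin n → (H →ₗ[R] R)) (hZ : ∀ j, IsInfinitesimalCharacter (Z j))
    (idx : Fin n → ℕ) :
    convFam n Z (∏ j, x (idx j)) =
      ∑ σ : Equiv.Perm (Fin n), ∏ j, Z (σ j) (x (idx j)) :=
  cmk_convolution_on_monomials_general x hεx n Z hZ idx
end

section
/- Let H = ⊕_{n∈ℕ} H^n be an ℕ-graded Hopf algebra over ℂ, let θ_z (z∈ℂ) be the grading automorphism acting as e^{nz} on H^n, and for ψ∈H* let θ*_z ψ = ψ∘θ_z. Suppose φ_ε ∈ Char H for every real ε ≠ 0, and suppose that for every t∈ℝ the convolution φ_ε^{*−1} * θ*_{tε}(φ_ε) converges pointwise on H, as ε→0, to a functional F_t ∈ H* (where φ_ε^{*−1} = φ_ε∘S is the convolution inverse). Then F is a flow: F_{t+s} = F_t * F_s for all s,t ∈ ℝ. -/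
open TensorProduct

/-- A character of `H`: a nonzero `R`-linear multiplicative map `H → R`. -/
def IsCharacter {R H : Type*} [CommSemiring R] [Semiring H] [Module R H]
    (χ : H →ₗ[R] R) : Prop :=
  χ ≠ 0 ∧ ∀ a b : H, χ (a * b) = χ a * χ b

/-! For a character `χ` put `G_z = χ ∘ S * χ ∘ θ_z`. Because the comultiplication respects the
grading, each `θ_z` is a coalgebra endomorphism (it preserves the counit since it is invertible),
so precomposition with `θ_z` is a ring endomorphism of the convolution algebra; together with
`χ * χ ∘ S = ε` this gives the exact identity `G_{tε} * (G_{sε} ∘ θ_{tε}) = G_{(t+s)ε}` for every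
`ε ≠ 0`. As `ε → 0`, `θ_{tε}` tends to the identity on each homogeneous component, so the left
side tends to `F_t * F_s` and the right side to `F_{t+s}`. -/

open Coalgebra WithConv Filter Topology

section Convolution

variable {R B C : Type*} [CommSemiring R] [AddCommMonoid B] [Module R B] [Coalgebra R B]
  [AddCommMonoid C] [Module R C] [Coalgebra R C]

theorem conv_counit (ξ : C →ₗ[R] R) : conv ξ counit = ξ :=
  congrArg ofConv (mul_one (toConv ξ))

theorem counit_conv (ξ : C →ₗ[R] R) : conv counit ξ = ξ :=
  congrArg ofConv (one_mul (toConv ξ))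

theorem conv_comp_of_map_comp_comul {f : B →ₗ[R] C} (hf : map f f ∘ₗ comul = comul ∘ₗ f)
    (ξ η : C →ₗ[R] R) : conv (ξ ∘ₗ f) (η ∘ₗ f) = conv ξ η ∘ₗ f := by
  simp only [conv, LinearMap.comp_assoc, ← hf, map_comp]

theorem counit_comp_of_map_comp_comul {f : B →ₗ[R] C} {g : C →ₗ[R] B}
    (hf : map f f ∘ₗ comul = comul ∘ₗ f) (hgf : g ∘ₗ f = LinearMap.id) :
    counit ∘ₗ f = counit := by
  have hgf' : (counit ∘ₗ g) ∘ₗ f = counit := by rw [LinearMap.comp_assoc, hgf]; rfl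
  calc counit ∘ₗ f = conv (counit ∘ₗ f) ((counit ∘ₗ g) ∘ₗ f) := by rw [hgf', conv_counit]
    _ = conv counit (counit ∘ₗ g) ∘ₗ f := conv_comp_of_map_comp_comul hf _ _
    _ = counit := by rw [counit_conv, hgf']

end Convolution

def CoalgHom.compConvRingHom {R A B C : Type*} [CommSemiring R] [Semiring A] [Algebra R A]
    [AddCommMonoid B] [Module R B] [Coalgebra R B] [AddCommMonoid C] [Module R C]
    [Coalgebra R C] (f : B →ₗc[R] C) : WithConv (C →ₗ[R] A) →+* WithConv (B →ₗ[R] A) where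
  toFun g := toConv (g.ofConv ∘ₗ f.toLinearMap)
  map_one' := by
    rw [LinearMap.convOne_def, ofConv_toConv, LinearMap.comp_assoc, f.counit_comp]; rfl
  map_mul' g h := congrArg toConv (LinearMap.convMul_comp_coalgHom_distrib g h f)
  map_zero' := rfl
  map_add' g h := congrArg toConv (LinearMap.add_comp _ _ _)

namespace IsCharacter

variable {R H : Type*} [CommRing R] [NoZeroDivisors R]

theorem map_one [Semiring H] [Module R H] {χ : H →ₗ[R] R} (hχ : IsCharacter χ) : χ 1 = 1 := by
  have hidem : IsIdempotentElem (χ 1) := by rw [IsIdempotentElem, ← hχ.2, mul_one]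
  refine (IsIdempotentElem.iff_eq_zero_or_one.mp hidem).resolve_left fun h0 => hχ.1 ?_
  ext a
  rw [← mul_one a, hχ.2, h0, mul_zero, LinearMap.zero_apply]

def toAlgHom [Semiring H] [Algebra R H] {χ : H →ₗ[R] R} (hχ : IsCharacter χ) : H →ₐ[R] R :=
  AlgHom.ofLinearMap χ hχ.map_one hχ.2

theorem mul_comp_antipode [Semiring H] [HopfAlgebra R H] {χ : H →ₗ[R] R}
    (hχ : IsCharacter χ) : toConv χ * toConv (χ ∘ₗ HopfAlgebra.antipode R) = 1 := by
  have := LinearMap.algHom_comp_convMul_distrib hχ.toAlgHom (toConv LinearMap.id)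
    (toConv (HopfAlgebra.antipode R))
  rw [LinearMap.id_mul_antipode] at this
  ext h
  simpa [toAlgHom, Algebra.algebraMap_eq_smul_one, hχ.map_one] using
    (LinearMap.congr_fun this h).symm

theorem conv_comp_conv [Semiring H] [HopfAlgebra R H] {χ : H →ₗ[R] R} (hχ : IsCharacter χ)
    (f g : H →ₗc[R] H) :
    conv (conv (χ ∘ₗ HopfAlgebra.antipode R) (χ ∘ₗ f.toLinearMap))
        (conv (χ ∘ₗ HopfAlgebra.antipode R) (χ ∘ₗ g.toLinearMap) ∘ₗ f.toLinearMap) =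
      conv (χ ∘ₗ HopfAlgebra.antipode R) (χ ∘ₗ g.toLinearMap ∘ₗ f.toLinearMap) := by
  set c := f.compConvRingHom (A := R)
  set σ := toConv (χ ∘ₗ HopfAlgebra.antipode R)
  refine congrArg ofConv <|
    calc σ * c (toConv χ) * c (σ * toConv (χ ∘ₗ g.toLinearMap))
        = σ * c (toConv χ * σ) * c (toConv (χ ∘ₗ g.toLinearMap)) := by
          simp only [map_mul, mul_assoc]
      _ = σ * c (toConv (χ ∘ₗ g.toLinearMap)) := by
          rw [hχ.mul_comp_antipode, c.map_one, mul_one]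

end IsCharacter

theorem LinearMap.ext_of_iSup_eq_top {R M N ι : Type*} [Semiring R] [AddCommMonoid M]
    [Module R M] [AddCommMonoid N] [Module R N] {p : ι → Submodule R M} (hp : iSup p = ⊤)
    {f g : M →ₗ[R] N} (h : ∀ i, ∀ x ∈ p i, f x = g x) : f = g :=
  LinearMap.eqLocus_eq_top.mp (top_unique (hp ▸ iSup_le fun i x hx => h i x hx))

section Grading

variable {H : Type*} [AddCommMonoid H] [Module ℂ H] {𝒜 : ℕ → Submodule ℂ H}
  {θ : ℂ → H →ₗ[ℂ] H}

theorem map_theta_of_mem_iSup_tensorSub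
    (hθ : ∀ (z : ℂ) (n : ℕ), ∀ h ∈ 𝒜 n, θ z h = Complex.exp (n * z) • h) (z : ℂ) {n : ℕ}
    {x : H ⊗[ℂ] H} (hx : x ∈ ⨆ (p : ℕ × ℕ) (_ : p.1 + p.2 = n), tensorSub (𝒜 p.1) (𝒜 p.2)) :
    map (θ z) (θ z) x = Complex.exp (n * z) • x := by
  suffices h : (⨆ (p : ℕ × ℕ) (_ : p.1 + p.2 = n), tensorSub (𝒜 p.1) (𝒜 p.2)) ≤
      LinearMap.eqLocus (map (θ z) (θ z)) (Complex.exp (n * z) • LinearMap.id) from h hx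
  refine iSup₂_le fun p hp => Submodule.span_le.mpr ?_
  rintro _ ⟨a, ha, b, hb, rfl⟩
  simp [hθ z _ a ha, hθ z _ b hb, smul_tmul', smul_smul, ← hp, ← Complex.exp_add, add_mul,
    add_comm]

theorem theta_zero (h𝒜 : iSup 𝒜 = ⊤)
    (hθ : ∀ (z : ℂ) (n : ℕ), ∀ h ∈ 𝒜 n, θ z h = Complex.exp (n * z) • h) :
    θ 0 = LinearMap.id :=
  LinearMap.ext_of_iSup_eq_top h𝒜 fun n a ha => by simp [hθ 0 n a ha]

theorem theta_comp_theta (h𝒜 : iSup 𝒜 = ⊤)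
    (hθ : ∀ (z : ℂ) (n : ℕ), ∀ h ∈ 𝒜 n, θ z h = Complex.exp (n * z) • h) (z w : ℂ) :
    θ w ∘ₗ θ z = θ (z + w) :=
  LinearMap.ext_of_iSup_eq_top h𝒜 fun n a ha => by
    simp [hθ z n a ha, hθ w n a ha, hθ (z + w) n a ha, smul_smul, ← Complex.exp_add, mul_add]

variable [Coalgebra ℂ H]

theorem map_theta_comp_comul (h𝒜 : iSup 𝒜 = ⊤)
    (hcomul : ∀ n : ℕ, ∀ h ∈ 𝒜 n,
      Coalgebra.comul (R := ℂ) h ∈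
        ⨆ (p : ℕ × ℕ) (_ : p.1 + p.2 = n), tensorSub (𝒜 p.1) (𝒜 p.2))
    (hθ : ∀ (z : ℂ) (n : ℕ), ∀ h ∈ 𝒜 n, θ z h = Complex.exp (n * z) • h) (z : ℂ) :
    map (θ z) (θ z) ∘ₗ comul = comul ∘ₗ θ z :=
  LinearMap.ext_of_iSup_eq_top h𝒜 fun n a ha => by
    simp [map_theta_of_mem_iSup_tensorSub hθ z (hcomul n a ha), hθ z n a ha]

theorem counit_comp_theta (h𝒜 : iSup 𝒜 = ⊤)
    (hcomul : ∀ n : ℕ, ∀ h ∈ 𝒜 n,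
      Coalgebra.comul (R := ℂ) h ∈
        ⨆ (p : ℕ × ℕ) (_ : p.1 + p.2 = n), tensorSub (𝒜 p.1) (𝒜 p.2))
    (hθ : ∀ (z : ℂ) (n : ℕ), ∀ h ∈ 𝒜 n, θ z h = Complex.exp (n * z) • h) (z : ℂ) :
    counit ∘ₗ θ z = counit :=
  counit_comp_of_map_comp_comul (map_theta_comp_comul h𝒜 hcomul hθ z) (g := θ (-z)) <| by
    rw [theta_comp_theta h𝒜 hθ, add_neg_cancel, theta_zero h𝒜 hθ]

def thetaCoalgHom (h𝒜 : iSup 𝒜 = ⊤)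
    (hcomul : ∀ n : ℕ, ∀ h ∈ 𝒜 n,
      Coalgebra.comul (R := ℂ) h ∈
        ⨆ (p : ℕ × ℕ) (_ : p.1 + p.2 = n), tensorSub (𝒜 p.1) (𝒜 p.2))
    (hθ : ∀ (z : ℂ) (n : ℕ), ∀ h ∈ 𝒜 n, θ z h = Complex.exp (n * z) • h) (z : ℂ) :
    H →ₗc[ℂ] H where
  toLinearMap := θ z
  counit_comp := counit_comp_theta h𝒜 hcomul hθ z
  map_comp_comul := map_theta_comp_comul h𝒜 hcomul hθ z

end Grading

section Limits

variable {ι : Type*} {l : Filter ι}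

theorem tendsto_conv {R C : Type*} [CommSemiring R] [TopologicalSpace R]
    [IsTopologicalSemiring R] [AddCommMonoid C] [Module R C] [Coalgebra R C]
    {ξ η : ι → C →ₗ[R] R} {ξ₀ η₀ : C →ₗ[R] R} (hξ : ∀ c, Tendsto (fun i => ξ i c) l (𝓝 (ξ₀ c)))
    (hη : ∀ c, Tendsto (fun i => η i c) l (𝓝 (η₀ c))) (c : C) :
    Tendsto (fun i => conv (ξ i) (η i) c) l (𝓝 (conv ξ₀ η₀ c)) := by
  change Tendsto (fun i => LinearMap.mul' R R (map (ξ i) (η i) (comul c))) l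
    (𝓝 (LinearMap.mul' R R (map ξ₀ η₀ (comul c))))
  induction (comul c : C ⊗[R] C) using TensorProduct.induction_on with
  | zero => simpa using tendsto_const_nhds
  | tmul a b => simpa using (hξ a).mul (hη b)
  | add x y hx hy => simpa using hx.add hy

theorem tendsto_apply_theta {H : Type*} [AddCommMonoid H] [Module ℂ H] {𝒜 : ℕ → Submodule ℂ H}
    {θ : ℂ → H →ₗ[ℂ] H} (h𝒜 : iSup 𝒜 = ⊤)
    (hθ : ∀ (z : ℂ) (n : ℕ), ∀ h ∈ 𝒜 n, θ z h = Complex.exp (n * z) • h)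
    {G : ι → H →ₗ[ℂ] ℂ} {G₀ : H →ₗ[ℂ] ℂ} (hG : ∀ h, Tendsto (fun i => G i h) l (𝓝 (G₀ h)))
    {z : ι → ℂ} (hz : Tendsto z l (𝓝 0)) (h : H) :
    Tendsto (fun i => (G i ∘ₗ θ (z i)) h) l (𝓝 (G₀ h)) := by
  refine Submodule.iSup_induction 𝒜 (motive := fun h => Tendsto (fun i => (G i ∘ₗ θ (z i)) h) l
    (𝓝 (G₀ h))) (h𝒜 ▸ Submodule.mem_top) (fun n a ha => ?_) (by simpa using tendsto_const_nhds)
    fun x y hx hy => by simpa using hx.add hy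
  have hexp : Tendsto (fun i => Complex.exp (n * z i)) l (𝓝 1) :=
    (Continuous.tendsto' (f := fun w : ℂ => Complex.exp (n * w)) (by fun_prop) 0 1
      (by simp)).comp hz
  simpa [hθ _ n a ha] using hexp.mul (hG a)

end Limits

theorem limit_of_renormalized_loop_is_flow_general
    {H : Type*} [Ring H] [HopfAlgebra ℂ H]
    (𝒜 : ℕ → Submodule ℂ H)
    (hdirect : DirectSum.IsInternal 𝒜)
    (hcomul : ∀ n : ℕ, ∀ h ∈ 𝒜 n,
      Coalgebra.comul (R := ℂ) h ∈
        ⨆ (p : ℕ × ℕ) (_ : p.1 + p.2 = n), tensorSub (𝒜 p.1) (𝒜 p.2))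
    (θ : ℂ → (H →ₗ[ℂ] H))
    (hθ : ∀ (z : ℂ) (n : ℕ), ∀ h ∈ 𝒜 n, θ z h = Complex.exp (n * z) • h)
    (φ : ℝ → (H →ₗ[ℂ] ℂ))
    (hφ : ∀ ε : ℝ, ε ≠ 0 → IsCharacter (φ ε))
    (F : ℝ → (H →ₗ[ℂ] ℂ))
    (hF : ∀ (t : ℝ) (h : H),
      Filter.Tendsto
        (fun ε : ℝ =>
          conv (φ ε ∘ₗ HopfAlgebra.antipode (R := ℂ) (A := H))
            (φ ε ∘ₗ θ ((t * ε : ℝ) : ℂ)) h)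
        (nhdsWithin (0 : ℝ) {0}ᶜ) (nhds (F t h))) :
    ∀ s t : ℝ, F (t + s) = conv (F t) (F s) := by
  intro s t
  ext h
  have h𝒜 := hdirect.submodule_iSup_eq_top
  have hz : Tendsto (fun ε : ℝ => ((t * ε : ℝ) : ℂ)) (𝓝[≠] 0) (𝓝 0) := by
    refine (Continuous.tendsto' ?_ 0 0 (by simp)).mono_left nhdsWithin_le_nhds
    fun_prop
  refine tendsto_nhds_unique ((hF (t + s) h).congr' ?_)
    (tendsto_conv (hF t) (tendsto_apply_theta h𝒜 hθ (hF s) hz) h)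
  filter_upwards [self_mem_nhdsWithin] with ε hε
  have hcomp : θ (s * ε : ℝ) ∘ₗ θ (t * ε : ℝ) = θ ((t + s) * ε : ℝ) := by
    rw [theta_comp_theta h𝒜 hθ]
    congr 1
    push_cast
    ring
  rw [← hcomp]
  exact LinearMap.congr_fun ((hφ ε hε).conv_comp_conv (thetaCoalgHom h𝒜 hcomul hθ _)
    (thetaCoalgHom h𝒜 hcomul hθ _)).symm h

/-- Let `H` be an ℕ-graded Hopf algebra over ℂ, `θ_z` the grading automorphism acting as
`e^{nz}` on `Hⁿ`, and `φ_ε` a character for every real `ε ≠ 0`. If for every `t ∈ ℝ` the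
convolution `φ_ε^{*−1} * θ*_{tε}(φ_ε)` (where `φ_ε^{*−1} = φ_ε ∘ S` and
`θ*_{tε} φ_ε = φ_ε ∘ θ_{tε}`) converges pointwise on `H`, as `ε → 0` (`ε ≠ 0`), to a
functional `F_t ∈ H*`, then `F` is a flow: `F_{t+s} = F_t * F_s` for all `s, t ∈ ℝ`. -/
theorem limit_of_renormalized_loop_is_flow
    {H : Type*} [Ring H] [HopfAlgebra ℂ H]
    (𝒜 : ℕ → Submodule ℂ H)
    (hdirect : DirectSum.IsInternal 𝒜)
    (hmul : ∀ (p q : ℕ), ∀ a ∈ 𝒜 p, ∀ b ∈ 𝒜 q, a * b ∈ 𝒜 (p + q))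
    (hcomul : ∀ n : ℕ, ∀ h ∈ 𝒜 n,
      Coalgebra.comul (R := ℂ) h ∈
        ⨆ (p : ℕ × ℕ) (_ : p.1 + p.2 = n), tensorSub (𝒜 p.1) (𝒜 p.2))
    (θ : ℂ → (H →ₗ[ℂ] H))
    (hθ : ∀ (z : ℂ) (n : ℕ), ∀ h ∈ 𝒜 n, θ z h = Complex.exp (n * z) • h)
    (φ : ℝ → (H →ₗ[ℂ] ℂ))
    (hφ : ∀ ε : ℝ, ε ≠ 0 → IsCharacter (φ ε))
    (F : ℝ → (H →ₗ[ℂ] ℂ))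
    (hF : ∀ (t : ℝ) (h : H),
      Filter.Tendsto
        (fun ε : ℝ =>
          conv (φ ε ∘ₗ HopfAlgebra.antipode (R := ℂ) (A := H))
            (φ ε ∘ₗ θ ((t * ε : ℝ) : ℂ)) h)
        (nhdsWithin (0 : ℝ) {0}ᶜ) (nhds (F t h))) :
    ∀ s t : ℝ, F (t + s) = conv (F t) (F s) :=
  limit_of_renormalized_loop_is_flow_general 𝒜 hdirect hcomul θ hθ φ hφ F hF
end
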